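/- Let a, b ∈ ℂ with |a| + |b| < 1. Define μ = −2a / (1 + |a|² − |b|² + √((1 + |a|² − |b|²)² − 4|a|²)) and ν = −2b / (1 + |b|² − |a|² + √((1 + |b|² − |a|²)² − 4|b|²)) (the square roots are real and well defined since the radicands are nonnegative when |a| + |b| < 1). Then |μ| < 1 and |ν| < 1. -/

import Mathlib

open Complex

/- Writing `x = |a|`, `y = |b|`, one has `1 + x² - y² - 2x = (1 - x - y)(1 - x + y) > 0`, so the real
denominator of `μ` exceeds `2|a| = |-2a|` already before the square root is added; by the symmetry
`a ↔ b` the same holds for `ν`. -/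

lemma two_mul_lt_one_add_sq_sub_sq {x y : ℝ} (hy : 0 ≤ y) (hxy : x + y < 1) :
    2 * x < 1 + x ^ 2 - y ^ 2 := by
  have hfactor : 1 + x ^ 2 - y ^ 2 - 2 * x = (1 - x - y) * (1 - x + y) := by ring
  have hpos : 0 < (1 - x - y) * (1 - x + y) := mul_pos (by linarith) (by linarith)
  linarith

lemma two_mul_lt_add_sqrt {x y : ℝ} (hy : 0 ≤ y) (hxy : x + y < 1) :
    2 * x < 1 + x ^ 2 - y ^ 2 + Real.sqrt ((1 + x ^ 2 - y ^ 2) ^ 2 - 4 * x ^ 2) :=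
  (two_mul_lt_one_add_sq_sub_sq hy hxy).trans_le (le_add_of_nonneg_right (Real.sqrt_nonneg _))

lemma norm_neg_two_mul_div_ofReal_lt_one {z : ℂ} {D : ℝ} (hD : 2 * ‖z‖ < D) :
    ‖-2 * z / (D : ℂ)‖ < 1 := by
  have hDpos : 0 < D := (by positivity : (0 : ℝ) ≤ 2 * ‖z‖).trans_lt hD
  rw [norm_div, norm_mul, norm_neg, Complex.norm_real, Real.norm_of_nonneg hDpos.le,
    div_lt_one hDpos]
  simpa using hD

lemma norm_change_of_variables_constant_lt_one {a b : ℂ} (hab : ‖a‖ + ‖b‖ < 1) :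
    ‖-2 * a /
        (((1 + ‖a‖ ^ 2 - ‖b‖ ^ 2 +
          Real.sqrt ((1 + ‖a‖ ^ 2 - ‖b‖ ^ 2) ^ 2
            - 4 * ‖a‖ ^ 2) : ℝ) : ℂ))‖ < 1 :=
  norm_neg_two_mul_div_ofReal_lt_one (two_mul_lt_add_sqrt (norm_nonneg b) hab)

/-- **Bounds on the change-of-variables constants.** For `|a| + |b| < 1`, the constants
`μ = −2a / (1 + |a|² − |b|² + √((1 + |a|² − |b|²)² − 4|a|²))` and
`ν = −2b / (1 + |b|² − |a|² + √((1 + |b|² − |a|²)² − 4|b|²))` satisfy `|μ| < 1`, `|ν| < 1`. -/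
theorem change_of_variables_constants_lt_one
    (a b : ℂ) (hab : ‖a‖ + ‖b‖ < 1) :
    ‖-2 * a /
        (((1 + ‖a‖ ^ 2 - ‖b‖ ^ 2 +
          Real.sqrt ((1 + ‖a‖ ^ 2 - ‖b‖ ^ 2) ^ 2
            - 4 * ‖a‖ ^ 2) : ℝ) : ℂ))‖ < 1 ∧
    ‖-2 * b /
        (((1 + ‖b‖ ^ 2 - ‖a‖ ^ 2 +
          Real.sqrt ((1 + ‖b‖ ^ 2 - ‖a‖ ^ 2) ^ 2
            - 4 * ‖b‖ ^ 2) : ℝ) : ℂ))‖ < 1 :=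
  ⟨norm_change_of_variables_constant_lt_one hab,
    norm_change_of_variables_constant_lt_one (by rwa [add_comm])⟩
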